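/- Let μ be the Gauss measure on [0,1] and let a_k(x) denote the k-th continued fraction digit of x. If c > 0 is sufficiently small, then the set of x ∈ [0,1] for which there exists m₀ ∈ ℕ such that for all m ≥ m₀ one has max_{1≤k≤m} a_k(x) ≥ c·m/(log m)², has μ-measure one. -/

import Mathlib

/-!
Let `D N m` be the set of `x` whose first `m` digits are all at most `N`. Every `x ∈ (0,1)` is
`1 / (j + G x)` with `j = a₁(x)`; the substitution `x = 1/(j + t)` turns the Gauss density into
`(log 2)⁻¹ / ((j + t)(j + t + 1))`, and summed over `j ≤ N` this telescopes to at most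
`N/(N+1)` times the density at `t`. Hence `μ(D N m) ≤ (N/(N+1))^m ≤ exp(-m/(N+1))`.
For `N = ⌈c m / (log m)²⌉` this is at most `m⁻²` once `log m ≥ 4c` and `log m ≤ m/8`, so
for every `c > 0` the Borel–Cantelli lemma shows that almost every `x` lies in only finitely
many of these sets.
-/

open MeasureTheory Filter Set
open scoped ENNReal

/-- The Gauss map `x ↦ 1/x mod 1`. -/
noncomputable def gaussMap (x : ℝ) : ℝ := Int.fract x⁻¹

/-- The `k`-th continued fraction digit `a_k(x) = ⌊1 / G^{k-1}(x)⌋` (for `k ≥ 1`). -/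
noncomputable def cfDigit (k : ℕ) (x : ℝ) : ℤ := ⌊(gaussMap^[k - 1] x)⁻¹⌋

/-- The Gauss measure on `[0,1]`, with density `(1/log 2) · 1/(1+x)` with respect to
Lebesgue measure. -/
noncomputable def gaussMeasure : Measure ℝ :=
  (volume.restrict (Set.Icc (0 : ℝ) 1)).withDensity
    fun x => ENNReal.ofReal ((Real.log 2)⁻¹ * (1 + x)⁻¹)

lemma measurable_gaussMap : Measurable gaussMap := measurable_inv.fract

lemma measurable_cfDigit (k : ℕ) : Measurable (cfDigit k) :=
  (measurable_gaussMap.iterate (k - 1)).inv.floor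

-- Stated from index 2 on: the truncated `k - 1` in `cfDigit` makes `cfDigit 0 = cfDigit 1`.
lemma cfDigit_succ_succ (k : ℕ) (x : ℝ) :
    cfDigit (k + 2) x = cfDigit (k + 1) (gaussMap x) := by
  simp only [cfDigit, show k + 2 - 1 = k + 1 by omega, Nat.add_sub_cancel,
    Function.iterate_succ_apply]

def boundedDigits (N m : ℕ) : Set ℝ := {x | ∀ k, 1 ≤ k → k ≤ m → cfDigit k x ≤ N}

lemma measurableSet_boundedDigits (N m : ℕ) : MeasurableSet (boundedDigits N m) := by
  simp only [boundedDigits, ofPred_forall]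
  exact .iInter fun k => .iInter fun _ => .iInter fun _ => measurable_cfDigit k measurableSet_Iic

lemma gaussMap_mem_boundedDigits {N m : ℕ} {x : ℝ} (hx : x ∈ boundedDigits N (m + 1)) :
    gaussMap x ∈ boundedDigits N m := by
  rintro (_ | k) hk hkm
  · omega
  · rw [← cfDigit_succ_succ]
    exact hx _ (by omega) (by omega)

noncomputable def cfBranch (j : ℕ) (t : ℝ) : ℝ := ((j : ℝ) + t)⁻¹

lemma cfBranch_floor_inv_gaussMap {x : ℝ} (hx : 0 ≤ x) : cfBranch ⌊x⁻¹⌋₊ (gaussMap x) = x := by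
  rw [cfBranch, gaussMap, natCast_floor_eq_intCast_floor (inv_nonneg.2 hx), Int.floor_add_fract,
    inv_inv]

lemma boundedDigits_succ_inter_subset (N m : ℕ) :
    boundedDigits N (m + 1) ∩ Ioo 0 1 ⊆
      (⋃ j ∈ Finset.Icc 1 N, cfBranch j '' (boundedDigits N m ∩ Ioo 0 1)) ∪
        range (cfBranch · 0) := by
  rintro x ⟨hxD, hx0, hx1⟩
  have hx := cfBranch_floor_inv_gaussMap hx0.le
  have hG : 0 ≤ gaussMap x := Int.fract_nonneg _
  rcases hG.eq_or_lt with h | h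
  · exact Or.inr ⟨_, by rwa [← h] at hx⟩
  · have hj1 : 1 ≤ ⌊x⁻¹⌋₊ := Nat.le_floor (by simpa using ((one_lt_inv₀ hx0).2 hx1).le)
    have hjN : ⌊x⁻¹⌋₊ ≤ N := by
      have h1 : cfDigit 1 x ≤ N := hxD 1 le_rfl (by omega)
      rw [← Int.floor_toNat]
      simp only [cfDigit, Nat.sub_self, Function.iterate_zero, id] at h1
      omega
    exact Or.inl (mem_iUnion₂.2 ⟨_, Finset.mem_Icc.2 ⟨hj1, hjN⟩, _,
      ⟨gaussMap_mem_boundedDigits hxD, h, Int.fract_lt_one _⟩, hx⟩)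

lemma gaussMeasure_absolutelyContinuous : gaussMeasure ≪ volume :=
  (withDensity_absolutelyContinuous _ _).trans
    (Measure.absolutelyContinuous_of_le Measure.restrict_le_self)

lemma gaussMeasure_compl_Ioo : gaussMeasure (Ioo 0 1)ᶜ = 0 := by
  refine withDensity_absolutelyContinuous _ _ ?_
  rw [Measure.restrict_congr_set Ioo_ae_eq_Icc.symm]
  exact ae_restrict_mem measurableSet_Ioo

lemma gaussMeasure_eq_setLIntegral {s : Set ℝ} (hs : s ⊆ Icc 0 1) :
    gaussMeasure s = ∫⁻ x in s, ENNReal.ofReal ((Real.log 2)⁻¹ * (1 + x)⁻¹) := by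
  rw [gaussMeasure, withDensity_apply', Measure.restrict_restrict_of_subset hs]

instance isProbabilityMeasure_gaussMeasure : IsProbabilityMeasure gaussMeasure := by
  have hlog : 0 < Real.log 2 := Real.log_pos one_lt_two
  have hint : ∫ x in (0 : ℝ)..1, (Real.log 2)⁻¹ * (1 + x)⁻¹ = 1 := by
    rw [intervalIntegral.integral_const_mul, intervalIntegral.integral_comp_add_left (·⁻¹),
      integral_inv_of_pos (by norm_num) (by norm_num)]
    norm_num [hlog.ne']
  constructor
  rw [← measure_inter_conull gaussMeasure_compl_Ioo, univ_inter,
    gaussMeasure_eq_setLIntegral Ioo_subset_Icc_self, ← ofReal_integral_eq_lintegral_ofReal,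
    ← integral_Ioc_eq_integral_Ioo, ← intervalIntegral.integral_of_le zero_le_one, hint,
    ENNReal.ofReal_one]
  · refine (ContinuousOn.integrableOn_Icc ?_).mono_set Ioo_subset_Icc_self
    exact continuousOn_const.mul ((by fun_prop : Continuous fun x : ℝ => 1 + x).continuousOn.inv₀
      fun x hx => (by linarith [hx.1] : (0 : ℝ) < 1 + x).ne')
  · exact (ae_restrict_iff' measurableSet_Ioo).2 (.of_forall fun x hx => by
      have := hx.1; positivity)

lemma gaussMeasure_image_cfBranch {j : ℕ} (hj : 1 ≤ j) {s : Set ℝ} (hs : MeasurableSet s)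
    (hs0 : s ⊆ Ici 0) :
    gaussMeasure (cfBranch j '' s) =
      ∫⁻ t in s, ENNReal.ofReal ((Real.log 2)⁻¹ * (((j : ℝ) + t) * ((j : ℝ) + t + 1))⁻¹) := by
  have hj' : (1 : ℝ) ≤ j := by exact_mod_cast hj
  have hpos : ∀ t ∈ s, 1 ≤ (j : ℝ) + t := fun t ht => by linarith [mem_Ici.1 (hs0 ht)]
  have himage : cfBranch j '' s ⊆ Icc 0 1 := by
    rintro _ ⟨t, ht, rfl⟩
    exact ⟨inv_nonneg.2 (by linarith [hpos t ht]), inv_le_one_of_one_le₀ (hpos t ht)⟩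
  have hderiv : ∀ t ∈ s, HasDerivWithinAt (cfBranch j) (-1 / ((j : ℝ) + t) ^ 2) s t :=
    fun t ht => (((hasDerivAt_id t).const_add _).inv
      (show (0 : ℝ) < j + id t by simp only [id]; linarith [hpos t ht]).ne').hasDerivWithinAt
  have hinj : InjOn (cfBranch j) s := fun a _ b _ hab => by simpa [cfBranch] using hab
  rw [gaussMeasure_eq_setLIntegral himage,
    lintegral_image_eq_lintegral_abs_deriv_mul hs hderiv hinj]
  refine setLIntegral_congr_fun hs fun t ht => ?_
  have ht := hpos t ht
  rw [← ENNReal.ofReal_mul (abs_nonneg _), cfBranch, abs_div, abs_neg, abs_one, abs_pow,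
    abs_of_pos (by linarith : (0 : ℝ) < j + t)]
  congr 1
  field_simp

lemma sum_Icc_inv_mul_add_one (N : ℕ) {t : ℝ} (ht : 0 ≤ t) :
    ∑ j ∈ Finset.Icc 1 N, (((j : ℝ) + t) * ((j : ℝ) + t + 1))⁻¹ =
      (1 + t)⁻¹ - ((N : ℝ) + 1 + t)⁻¹ := by
  induction N with
  | zero => simp
  | succ n ih =>
    rw [Finset.sum_Icc_succ_top (by omega), ih]
    push_cast
    field_simp
    ring

lemma sum_Icc_inv_mul_add_one_le (N : ℕ) {t : ℝ} (ht : 0 ≤ t) :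
    ∑ j ∈ Finset.Icc 1 N, (((j : ℝ) + t) * ((j : ℝ) + t + 1))⁻¹ ≤
      (N / (N + 1)) * (1 + t)⁻¹ := by
  have h : (N : ℝ) / (N + 1) = 1 - ((N : ℝ) + 1)⁻¹ := by field_simp; ring
  rw [sum_Icc_inv_mul_add_one N ht, h, sub_mul, one_mul, ← mul_inv]
  gcongr
  nlinarith [(N.cast_nonneg : (0 : ℝ) ≤ N)]

lemma gaussMeasure_boundedDigits_succ_le (N m : ℕ) :
    gaussMeasure (boundedDigits N (m + 1)) ≤
      ENNReal.ofReal (N / (N + 1)) * gaussMeasure (boundedDigits N m) := by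
  set s := boundedDigits N m ∩ Ioo 0 1
  have hs : MeasurableSet s := (measurableSet_boundedDigits N m).inter measurableSet_Ioo
  have hs0 : s ⊆ Ici 0 := fun t ht => mem_Ici.2 ht.2.1.le
  have hrange : gaussMeasure (range (cfBranch · 0)) = 0 :=
    gaussMeasure_absolutelyContinuous ((countable_range _).measure_zero _)
  calc gaussMeasure (boundedDigits N (m + 1))
      = gaussMeasure (boundedDigits N (m + 1) ∩ Ioo 0 1) :=
        (measure_inter_conull gaussMeasure_compl_Ioo).symm
    _ ≤ gaussMeasure (⋃ j ∈ Finset.Icc 1 N, cfBranch j '' s) := by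
        refine (measure_mono (boundedDigits_succ_inter_subset N m)).trans ?_
        exact (measure_union_le _ _).trans (by rw [hrange, add_zero])
    _ ≤ ∑ j ∈ Finset.Icc 1 N, gaussMeasure (cfBranch j '' s) := measure_biUnion_finset_le _ _
    _ = ∫⁻ t in s, ∑ j ∈ Finset.Icc 1 N,
          ENNReal.ofReal ((Real.log 2)⁻¹ * (((j : ℝ) + t) * ((j : ℝ) + t + 1))⁻¹) := by
        rw [lintegral_finsetSum _ fun j _ => by fun_prop]
        exact Finset.sum_congr rfl fun j hj =>
          gaussMeasure_image_cfBranch (Finset.mem_Icc.1 hj).1 hs hs0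
    _ ≤ ∫⁻ t in s, ENNReal.ofReal (N / (N + 1)) *
          ENNReal.ofReal ((Real.log 2)⁻¹ * (1 + t)⁻¹) := by
        refine setLIntegral_mono (by fun_prop) fun t ht => ?_
        have ht0 : 0 ≤ t := hs0 ht
        rw [← ENNReal.ofReal_sum_of_nonneg fun j _ => by positivity,
          ← ENNReal.ofReal_mul (by positivity), ← Finset.mul_sum, mul_left_comm]
        exact ENNReal.ofReal_le_ofReal (mul_le_mul_of_nonneg_left
          (sum_Icc_inv_mul_add_one_le N ht0) (by positivity))
    _ ≤ ENNReal.ofReal (N / (N + 1)) * gaussMeasure (boundedDigits N m) := by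
        rw [lintegral_const_mul' _ _ ENNReal.ofReal_ne_top,
          ← gaussMeasure_eq_setLIntegral (inter_subset_right.trans Ioo_subset_Icc_self)]
        gcongr
        exact inter_subset_left

lemma gaussMeasure_boundedDigits_le (N m : ℕ) :
    gaussMeasure (boundedDigits N m) ≤ ENNReal.ofReal (N / (N + 1)) ^ m := by
  induction m with
  | zero => simp [prob_le_one]
  | succ m ih =>
    rw [pow_succ']
    exact (gaussMeasure_boundedDigits_succ_le N m).trans (by gcongr)

lemma div_add_one_pow_le_exp {a : ℝ} (ha : 0 ≤ a) (m : ℕ) :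
    (a / (a + 1)) ^ m ≤ Real.exp (-(m / (a + 1))) := by
  have h : a / (a + 1) = 1 - (a + 1)⁻¹ := by field_simp; ring
  calc (a / (a + 1)) ^ m ≤ Real.exp (-(a + 1)⁻¹) ^ m := by
        rw [h]
        exact pow_le_pow_left₀ (by rw [← h]; positivity) (Real.one_sub_le_exp_neg _) m
    _ = Real.exp (-(m / (a + 1))) := by rw [← Real.exp_nat_mul]; ring_nf

lemma eventually_ceil_div_add_one_pow_le {c : ℝ} (hc : 0 < c) :
    ∀ᶠ m : ℕ in atTop,
      ((⌈c * m / Real.log m ^ 2⌉₊ : ℝ) / (⌈c * m / Real.log m ^ 2⌉₊ + 1)) ^ m ≤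
        ((m : ℝ) ^ 2)⁻¹ := by
  have hlog : ∀ᶠ m : ℕ in atTop, 4 * c ≤ Real.log m :=
    (Real.tendsto_log_atTop.comp tendsto_natCast_atTop_atTop).eventually_ge_atTop _
  have hlog_le : ∀ᶠ m : ℕ in atTop, Real.log m ≤ m / 8 := by
    filter_upwards [tendsto_natCast_atTop_atTop.eventually
      (Real.isLittleO_log_id_atTop.bound (by norm_num : (0 : ℝ) < 1 / 8))] with m hm
    rw [id, Real.norm_natCast] at hm
    linarith [Real.le_norm_self (Real.log m)]
  filter_upwards [hlog, hlog_le, eventually_ge_atTop 1] with m hL hLm hm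
  set L := Real.log m
  set T := c * m / L ^ 2
  have hm0 : (0 : ℝ) < m := by exact_mod_cast hm
  have hL0 : 0 < L := by linarith
  have hT : (⌈T⌉₊ : ℝ) + 1 ≤ T + 2 := by linarith [Nat.ceil_lt_add_one (by positivity : 0 ≤ T)]
  have hLT : 2 * L * T ≤ m / 2 := by
    have hTL : T * L ^ 2 = c * m := div_mul_cancel₀ _ (by positivity)
    refine le_of_mul_le_mul_right ?_ hL0
    nlinarith [mul_le_mul_of_nonneg_left hL hm0.le]
  have hkey : 2 * L ≤ m / ((⌈T⌉₊ : ℝ) + 1) := by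
    rw [le_div_iff₀ (by positivity)]
    nlinarith
  calc ((⌈T⌉₊ : ℝ) / (⌈T⌉₊ + 1)) ^ m ≤ Real.exp (-(m / ((⌈T⌉₊ : ℝ) + 1))) :=
        div_add_one_pow_le_exp (by positivity) m
    _ ≤ Real.exp (-(2 * L)) := Real.exp_le_exp.2 (by linarith)
    _ = ((m : ℝ) ^ 2)⁻¹ := by
        rw [Real.exp_neg, show 2 * L = Real.log ((m : ℝ) ^ 2) by rw [Real.log_pow]; push_cast; ring,
          Real.exp_log (by positivity)]

lemma tsum_gaussMeasure_boundedDigits_ne_top {c : ℝ} (hc : 0 < c) :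
    ∑' m : ℕ, gaussMeasure (boundedDigits ⌈c * m / Real.log m ^ 2⌉₊ m) ≠ ∞ := by
  set θ : ℕ → ℝ := fun m =>
    ((⌈c * m / Real.log m ^ 2⌉₊ : ℝ) / (⌈c * m / Real.log m ^ 2⌉₊ + 1)) ^ m
  have hθ : Summable θ := by
    refine (Real.summable_nat_pow_inv.2 one_lt_two).of_norm_bounded_eventually_nat ?_
    filter_upwards [eventually_ceil_div_add_one_pow_le hc] with m hm
    rwa [Real.norm_of_nonneg (by positivity)]
  refine ne_top_of_le_ne_top (ENNReal.ofReal_ne_top (r := ∑' m, θ m)) ?_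
  rw [ENNReal.ofReal_tsum_of_nonneg (fun m => by positivity) hθ]
  exact ENNReal.tsum_le_tsum fun m =>
    (gaussMeasure_boundedDigits_le _ m).trans (ENNReal.ofReal_pow (by positivity) _).ge

/-- If `c > 0` is sufficiently small, the set of `x` whose maximal continued fraction
digit among the first `m` digits is eventually always at least `c·m/(log m)²` has
Gauss measure one. -/
theorem cf_max_digit_eah_one :
    ∃ c₀ : ℝ, 0 < c₀ ∧ ∀ c : ℝ, 0 < c → c ≤ c₀ →
      gaussMeasure {x : ℝ | ∃ m₀ : ℕ, ∀ m : ℕ, m₀ ≤ m →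
        ∃ k : ℕ, 1 ≤ k ∧ k ≤ m ∧ c * m / (Real.log m) ^ 2 ≤ (cfDigit k x : ℝ)} = 1 := by
  refine ⟨1, one_pos, fun c hc _ => ?_⟩
  have hae := ae_eventually_notMem (tsum_gaussMeasure_boundedDigits_ne_top hc)
  refine (measure_congr (ae_eq_univ.2 ?_)).trans measure_univ
  filter_upwards [hae] with x hx
  obtain ⟨m₀, hm₀⟩ := eventually_atTop.1 hx
  refine ⟨m₀, fun m hm => ?_⟩
  by_contra! hsmall
  refine hm₀ m hm fun k hk hkm => ?_
  exact_mod_cast (hsmall k hk hkm).le.trans (Nat.le_ceil _)
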